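/- arXiv:cs/0101030 — 3 statements merged into one kernel-verified Lean document; each statement's English description precedes it below -/
import Mathlib

section
/- In the bisection setting below, every intersecting pair (x_i, y_j) ∈ (G ∪ E) − B satisfies: (x_{i+1}, y_j) ∈ G ∪ E ∪ B, (x_i, y_{j+1}) ∈ G ∪ E ∪ B, and (x_{i+1}, y_{j+1}) ∈ G ∪ E ∪ B; that is, (x_i,y_j) has P-predecessor (x_{i+1},y_j), Q-predecessor (x_i,y_{j+1}), and PQ-predecessor (x_{i+1},y_{j+1}). -/
/-- A leaf-labeled rooted tree: either a labeled leaf, or an internal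
vertex with a list of subtrees. -/
inductive ETree (L : Type) : Type where
  | leaf : L → ETree L
  | node : List (ETree L) → ETree L

namespace ETree

variable {L : Type} [DecidableEq L]

/-- The list of leaf labels of a tree. -/
def labelList : ETree L → List L
  | leaf a => [a]
  | node ts => ts.attach.flatMap fun ⟨t, _⟩ => labelList t

/-- The label set of a tree: the set of its leaf labels. -/
def labelSet (t : ETree L) : Finset L := (labelList t).toFinset

/-- The list of children (as subtrees) of the root of a tree. -/
def children : ETree L → List (ETree L)
  | leaf _ => []
  | node ts => ts

/-- A rooted tree is homeomorphic if every internal vertex has at least two children. -/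
inductive Homeo : ETree L → Prop where
  | leaf (a : L) : Homeo (leaf a)
  | node (ts : List (ETree L)) (hlen : 2 ≤ ts.length) (h : ∀ t ∈ ts, Homeo t) :
      Homeo (node ts)

/-- An evolutionary tree: a homeomorphic rooted tree whose leaves carry distinct labels. -/
def IsEvolutionary (t : ETree L) : Prop := Homeo t ∧ (labelList t).Nodup

/-- `restrict t s` is the homeomorphic version `t‖s` of the tree obtained from `t` by
deleting all leaves with labels outside `s` (contracting away all vertices that are
not leaves or lowest common ancestors of two leaves); `none` if nothing remains. -/
def restrict : ETree L → Finset L → Option (ETree L)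
  | leaf a, s => if a ∈ s then some (leaf a) else none
  | node ts, s =>
      match ts.attach.filterMap (fun ⟨t, _⟩ => restrict t s) with
      | [] => none
      | [u] => some u
      | us => some (node us)

/-- Label-preserving isomorphism of leaf-labeled rooted trees. -/
inductive Iso : ETree L → ETree L → Prop where
  | leaf (a : L) : Iso (leaf a) (leaf a)
  | node (ts us : List (ETree L)) (e : Fin ts.length ≃ Fin us.length)
      (h : ∀ i : Fin ts.length, Iso (ts.get i) (us.get (e i))) :
      Iso (node ts) (node us)

/-- Isomorphism of possibly-empty trees. -/
def IsoO : Option (ETree L) → Option (ETree L) → Prop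
  | none, none => True
  | some t, some u => Iso t u
  | _, _ => False

/-- `rr T₁ T₂`: the number of leaves in a maximum agreement subtree of `T₁` and `T₂`,
i.e. the maximum cardinality of a subset `s` of the common labels such that `T₁‖s`
and `T₂‖s` are label-preservingly isomorphic. -/
noncomputable def rr (t₁ t₂ : ETree L) : ℕ :=
  sSup {k | ∃ s : Finset L, s ⊆ labelSet t₁ ∩ labelSet t₂ ∧ s.card = k ∧
    IsoO (restrict t₁ s) (restrict t₂ s)}

end ETree

namespace ETree

variable {L : Type} [DecidableEq L]

noncomputable instance : DecidableEq (ETree L) := Classical.decEq _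

/-- `mm U V`: the maximum weight of a matching of the complete bipartite graph
`(U, V, U×V)` in which the edge `(u,v)` has weight `rr u v` (note that in our
representation a vertex of a tree is identified with the subtree it roots, so the
weight of `(u,v)` is `rr` of the two rooted subtrees). -/
noncomputable def mm (U V : Finset (ETree L)) : ℕ :=
  sSup {w | ∃ M : Finset (ETree L × ETree L),
    (∀ p ∈ M, p.1 ∈ U ∧ p.2 ∈ V) ∧
    (∀ p ∈ M, ∀ q ∈ M, p ≠ q → p.1 ≠ q.1 ∧ p.2 ≠ q.2) ∧
    w = ∑ p ∈ M, rr p.1 p.2}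

/-- `mmb U V x y`: the maximum weight of a matching of the complete bipartite graph
`(U, V, U×V)` (edge `(u,v)` weighted by `rr u v`) that does not use the edge `(x,y)`. -/
noncomputable def mmb (U V : Finset (ETree L)) (x y : ETree L) : ℕ :=
  sSup {w | ∃ M : Finset (ETree L × ETree L),
    (∀ p ∈ M, p.1 ∈ U ∧ p.2 ∈ V) ∧
    (∀ p ∈ M, ∀ q ∈ M, p ≠ q → p.1 ≠ q.1 ∧ p.2 ≠ q.2) ∧
    (x, y) ∉ M ∧
    w = ∑ p ∈ M, rr p.1 p.2}

/-- `IsSubtree s t`: `s` occurs as a rooted subtree `t^u` of `t` (vertices of a tree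
with distinct leaf labels are identified with the subtrees they root). -/
inductive IsSubtree : ETree L → ETree L → Prop where
  | refl (t : ETree L) : IsSubtree t t
  | child {s c : ETree L} {ts : List (ETree L)} (hc : c ∈ ts) (h : IsSubtree s c) :
      IsSubtree s (node ts)

end ETree

/-- A root path `x₁,…,x_len` of a tree: a vertex-simple path starting at the root and
descending, containing no leaf of the tree.  Vertices are identified with the subtrees
they root, so `vert i` is the subtree `S^{xᵢ}` rooted at the `i`-th vertex of the path
(indices run from `1` to `len`). -/
structure RootPath (L : Type) where
  /-- The ambient tree. -/
  tree : ETree L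
  /-- The number of vertices of the path. -/
  len : ℕ
  /-- The subtree rooted at the `i`-th vertex of the path, for `1 ≤ i ≤ len`. -/
  vert : ℕ → ETree L
  len_pos : 1 ≤ len
  first : vert 1 = tree
  /-- The path contains no leaf of the tree. -/
  no_leaf : ∀ i, 1 ≤ i → i ≤ len → ∃ ts, vert i = ETree.node ts
  /-- Each path vertex after the first is a child of the previous one. -/
  step : ∀ i, 1 ≤ i → i < len → vert (i + 1) ∈ (vert i).children

namespace RootPath

variable {L : Type} [DecidableEq L]

/-- `offPath P i` is the set of children of the path vertex `xᵢ` that are not on the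
path (the set `Xᵢ`). -/
noncomputable def offPath (P : RootPath L) (i : ℕ) : Finset (ETree L) :=
  if i < P.len then ((P.vert i).children.toFinset).erase (P.vert (i + 1))
  else (P.vert i).children.toFinset

end RootPath

/-- `Intersecting P Q i j`: the pair `(xᵢ, y_j)` is intersecting, i.e. `S₁^u` and `S₂^v`
share a leaf label for some `u ∈ Xᵢ` and `v ∈ Y_j`. -/
def Intersecting {L : Type} [DecidableEq L] (P Q : RootPath L) (i j : ℕ) : Prop :=
  ∃ u ∈ P.offPath i, ∃ v ∈ Q.offPath j,
    (ETree.labelSet u ∩ ETree.labelSet v).Nonempty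

/-! ### The bisection tree Ψ -/

/-- `RectInter Inter i i' j j'`: the pair of subpaths `(P[i,i'], Q[j,j'])` is
intersecting, i.e. some `(x_a, y_b)` with `a ∈ [i,i']`, `b ∈ [j,j']` is intersecting. -/
def RectInter (Inter : ℕ → ℕ → Prop) (i i' j j' : ℕ) : Prop :=
  ∃ a b, i ≤ a ∧ a ≤ i' ∧ j ≤ b ∧ b ≤ j' ∧ Inter a b

/-- A pair `(P[i,i'], Q[j,j'])` is a leaf of Ψ iff `i = i'`, `j = j'` and `(xᵢ,y_j)` is
intersecting, or the pair is nonintersecting. -/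
def IsLeafPair (Inter : ℕ → ℕ → Prop) (i i' j j' : ℕ) : Prop :=
  (i = i' ∧ j = j' ∧ Inter i j) ∨ ¬ RectInter Inter i i' j j'

/-- The right endpoint `(k₁+k₂−1)/2` of the upper half of the interval `[k₁,k₂]`. -/
def upperHalfHi (k₁ k₂ : ℕ) : ℕ := (k₁ + k₂ - 1) / 2

/-- The left endpoint `(k₁+k₂+1)/2` of the lower half of the interval `[k₁,k₂]`. -/
def lowerHalfLo (k₁ k₂ : ℕ) : ℕ := (k₁ + k₂ + 1) / 2

/-- `PsiChild Inter c d`: the pair `c = (P[i,i'],Q[j,j'])` is a child in Ψ of the pair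
`d`.  A nonleaf pair with `j = j'` has the two children obtained by replacing `P[i,i']`
by its upper and lower halves; a nonleaf pair with `j < j'` has the four children
pairing the upper/lower halves of `P[i,i']` with the upper/lower halves of `Q[j,j']`.
Pairs are quadruples `(i, i', j, j')` of indices. -/
def PsiChild (Inter : ℕ → ℕ → Prop) (c d : ℕ × ℕ × ℕ × ℕ) : Prop :=
  ¬ IsLeafPair Inter d.1 d.2.1 d.2.2.1 d.2.2.2 ∧
  ((d.2.2.1 = d.2.2.2 ∧
      (c = (d.1, upperHalfHi d.1 d.2.1, d.2.2.1, d.2.2.2) ∨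
       c = (lowerHalfLo d.1 d.2.1, d.2.1, d.2.2.1, d.2.2.2))) ∨
   (d.2.2.1 < d.2.2.2 ∧
      (c = (d.1, upperHalfHi d.1 d.2.1, d.2.2.1, upperHalfHi d.2.2.1 d.2.2.2) ∨
       c = (d.1, upperHalfHi d.1 d.2.1, lowerHalfLo d.2.2.1 d.2.2.2, d.2.2.2) ∨
       c = (lowerHalfLo d.1 d.2.1, d.2.1, d.2.2.1, upperHalfHi d.2.2.1 d.2.2.2) ∨
       c = (lowerHalfLo d.1 d.2.1, d.2.1, lowerHalfLo d.2.2.1 d.2.2.2, d.2.2.2))))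

/-- `PsiDesc Inter anc des`: `des` is `anc` itself or a descendant of `anc` in Ψ. -/
def PsiDesc (Inter : ℕ → ℕ → Prop) (anc des : ℕ × ℕ × ℕ × ℕ) : Prop :=
  Relation.ReflTransGen (fun a b => PsiChild Inter b a) anc des

/-- `InPsi Inter p' q' c`: the pair `c` is a node of Ψ, whose root is
`(P[1,p'−1], Q[1,q'−1])`. -/
def InPsi (Inter : ℕ → ℕ → Prop) (p' q' : ℕ) (c : ℕ × ℕ × ℕ × ℕ) : Prop :=
  PsiDesc Inter (1, p' - 1, 1, q' - 1) c

/-- `IsPsiLeaf Inter p' q' c`: `c` is a leaf of Ψ. -/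
def IsPsiLeaf (Inter : ℕ → ℕ → Prop) (p' q' : ℕ) (c : ℕ × ℕ × ℕ × ℕ) : Prop :=
  InPsi Inter p' q' c ∧ IsLeafPair Inter c.1 c.2.1 c.2.2.1 c.2.2.2

/-- `InE Inter p' q' a b`: the pair `(x_a, y_b)` belongs to `E`, the set of all
ceilings `(xᵢ,y_j)`, P-diagonals `(x_{i'+1},y_j)`, Q-diagonals `(xᵢ,y_{j'+1})` and
floors `(x_{i'+1},y_{j'+1})` of leaves `(P[i,i'],Q[j,j'])` of Ψ. -/
def InE (Inter : ℕ → ℕ → Prop) (p' q' : ℕ) (a b : ℕ) : Prop :=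
  ∃ c : ℕ × ℕ × ℕ × ℕ, IsPsiLeaf Inter p' q' c ∧
    ((a, b) = (c.1, c.2.2.1) ∨ (a, b) = (c.2.1 + 1, c.2.2.1) ∨
     (a, b) = (c.1, c.2.2.2 + 1) ∨ (a, b) = (c.2.1 + 1, c.2.2.2 + 1))

/-- `B = {(xᵢ,y_{q'}) : i ∈ [1,p']} ∪ {(x_{p'},y_j) : j ∈ [1,q']}`. -/
def InB (p' q' : ℕ) (a b : ℕ) : Prop :=
  (b = q' ∧ 1 ≤ a ∧ a ≤ p') ∨ (a = p' ∧ 1 ≤ b ∧ b ≤ q')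

/-- `G = G_P ∪ G_Q` where `G_P = {(xᵢ,y₁) : i ∈ [1,p']}` and
`G_Q = {(x₁,y_j) : j ∈ [1,q']}`. -/
def InG (p' q' : ℕ) (a b : ℕ) : Prop :=
  (b = 1 ∧ 1 ≤ a ∧ a ≤ p') ∨ (a = 1 ∧ 1 ≤ b ∧ b ≤ q')

/-- Membership in `G ∪ E ∪ B`. -/
def InGEB (Inter : ℕ → ℕ → Prop) (p' q' : ℕ) (a b : ℕ) : Prop :=
  InG p' q' a b ∨ InE Inter p' q' a b ∨ InB p' q' a b

/-- Invariant of nodes of Ψ: both intervals are nonempty with power-of-two lengths,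
the Q-length does not exceed the P-length, and everything stays within the root
rectangle `[1,2^α] × [1,2^β]`. -/
def PsiInv (α β a a' b b' : ℕ) : Prop :=
  ∃ g h : ℕ, h ≤ g ∧ g ≤ α ∧ 1 ≤ a ∧ a' + 1 = a + 2 ^ g ∧ a' ≤ 2 ^ α ∧
    1 ≤ b ∧ b' + 1 = b + 2 ^ h ∧ b' ≤ 2 ^ β

lemma two_pow_split {g : ℕ} (hg : 1 ≤ g) : 2 ^ g = 2 * 2 ^ (g - 1) := by
  rw [← pow_succ']; congr 1; omega

lemma halves_eq (a g : ℕ) (ha : 1 ≤ a) (hg : 1 ≤ g) :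
    upperHalfHi a (a + 2 ^ g - 1) = a + 2 ^ (g - 1) - 1 ∧
    lowerHalfLo a (a + 2 ^ g - 1) = a + 2 ^ (g - 1) := by
  have h2 := two_pow_split hg
  have h1 : 1 ≤ 2 ^ (g - 1) := Nat.one_le_two_pow
  unfold upperHalfHi lowerHalfLo
  omega

lemma psiInv_child {Inter : ℕ → ℕ → Prop} {α β : ℕ} {c d : ℕ × ℕ × ℕ × ℕ}
    (hd : PsiInv α β d.1 d.2.1 d.2.2.1 d.2.2.2) (hch : PsiChild Inter c d) :
    PsiInv α β c.1 c.2.1 c.2.2.1 c.2.2.2 := by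
  obtain ⟨a, a', b, b'⟩ := d
  obtain ⟨g, h, hgh, hgα, ha1, ha', haα, hb1, hb', hbβ⟩ := hd
  try simp only at ha1 ha' haα hb1 hb' hbβ ⊢
  obtain ⟨hnl, hcase⟩ := hch
  simp only [IsLeafPair, not_or, not_not] at hnl
  obtain ⟨hndeg, hR⟩ := hnl
  have h1g : 1 ≤ 2 ^ (g - 1) := Nat.one_le_two_pow
  have h1h : 1 ≤ 2 ^ (h - 1) := Nat.one_le_two_pow
  have h2g : 1 ≤ 2 ^ g := Nat.one_le_two_pow
  have h2h : 1 ≤ 2 ^ h := Nat.one_le_two_pow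
  have hp0 : (2 : ℕ) ^ 0 = 1 := pow_zero 2
  have hga : a' = a + 2 ^ g - 1 := by omega
  have hhb : b' = b + 2 ^ h - 1 := by omega
  rcases hcase with ⟨hbb, hc⟩ | ⟨hbb, hc⟩
  · -- j = j' : two children halving P
    try simp only at hbb
    have hph : (2 : ℕ) ^ h = 1 := by
      rcases Nat.eq_zero_or_pos h with h0 | h1'
      · rw [h0, hp0]
      · exfalso
        have := (Nat.one_lt_two_pow_iff (n := h)).2 (by omega)
        omega
    have hg1 : 1 ≤ g := by
      rcases Nat.eq_zero_or_pos g with hg0 | hg1'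
      · exfalso
        rw [hg0, hp0] at ha'
        obtain ⟨u, v, hu1, hu2, hv1, hv2, hI⟩ := hR
        refine hndeg ⟨by omega, hbb, ?_⟩
        have hua : u = a := by omega
        have hvb : v = b := by omega
        rwa [hua, hvb] at hI
      · exact hg1'
    obtain ⟨hU, hL⟩ := halves_eq a g ha1 hg1
    rw [← hga] at hU hL
    have hgg := two_pow_split hg1
    rcases hc with hc | hc <;> subst hc <;>
      exact ⟨g - 1, 0, by omega, by omega, by (try dsimp only); omega,
        by (try dsimp only); omega, by (try dsimp only); omega,
        by (try dsimp only); omega, by (try dsimp only); omega,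
        by (try dsimp only); omega⟩
  · -- j < j' : four children halving both
    try simp only at hbb
    have hh1 : 1 ≤ h := by
      rcases Nat.eq_zero_or_pos h with h0 | h1'
      · rw [h0, hp0] at hb'; omega
      · exact h1'
    have hg1 : 1 ≤ g := le_trans hh1 hgh
    obtain ⟨hU, hL⟩ := halves_eq a g ha1 hg1
    obtain ⟨hUQ, hLQ⟩ := halves_eq b h hb1 hh1
    rw [← hga] at hU hL
    rw [← hhb] at hUQ hLQ
    have hgg := two_pow_split hg1
    have hhh := two_pow_split hh1
    rcases hc with hc | hc | hc | hc <;> subst hc <;>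
      exact ⟨g - 1, h - 1, by omega, by omega, by (try dsimp only); omega,
        by (try dsimp only); omega, by (try dsimp only); omega,
        by (try dsimp only); omega, by (try dsimp only); omega,
        by (try dsimp only); omega⟩

lemma psiInv_of_inPsi {Inter : ℕ → ℕ → Prop} {α β p' q' : ℕ} (hβα : β ≤ α)
    (hp : p' = 2 ^ α + 1) (hq : q' = 2 ^ β + 1) {c : ℕ × ℕ × ℕ × ℕ}
    (h : InPsi Inter p' q' c) : PsiInv α β c.1 c.2.1 c.2.2.1 c.2.2.2 := by
  induction h with
  | refl =>
      have h1 : 1 ≤ 2 ^ α := Nat.one_le_two_pow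
      have h2 : 1 ≤ 2 ^ β := Nat.one_le_two_pow
      show PsiInv α β 1 (p' - 1) 1 (q' - 1)
      exact ⟨α, β, hβα, le_refl _, le_refl _, by omega, by omega, le_refl _,
        by omega, by omega⟩
  | tail _ hch ih => exact psiInv_child ih hch

lemma coverage {Inter : ℕ → ℕ → Prop} {p' q' α β : ℕ} :
    ∀ n : ℕ, ∀ c : ℕ × ℕ × ℕ × ℕ, c.2.1 - c.1 + (c.2.2.2 - c.2.2.1) ≤ n →
    InPsi Inter p' q' c → PsiInv α β c.1 c.2.1 c.2.2.1 c.2.2.2 →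
    ∀ i j : ℕ, c.1 ≤ i → i ≤ c.2.1 → c.2.2.1 ≤ j → j ≤ c.2.2.2 → Inter i j →
    IsPsiLeaf Inter p' q' (i, i, j, j) := by
  intro n
  induction n using Nat.strong_induction_on with
  | _ n ih =>
  rintro ⟨a, a', b, b'⟩ hmeas hpsi hinv i j hi1 hi2 hj1 hj2 hIJ
  try simp only at hmeas hi1 hi2 hj1 hj2
  obtain ⟨g, h, hgh, hgα, ha1, ha', haα, hb1, hb', hbβ⟩ := hinv
  try simp only at ha1 ha' haα hb1 hb' hbβ
  have h1g : 1 ≤ 2 ^ (g - 1) := Nat.one_le_two_pow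
  have h1h : 1 ≤ 2 ^ (h - 1) := Nat.one_le_two_pow
  have h2g : 1 ≤ 2 ^ g := Nat.one_le_two_pow
  have h2h : 1 ≤ 2 ^ h := Nat.one_le_two_pow
  have hp0 : (2 : ℕ) ^ 0 = 1 := pow_zero 2
  have hga : a' = a + 2 ^ g - 1 := by omega
  have hhb : b' = b + 2 ^ h - 1 := by omega
  by_cases hleaf : IsLeafPair Inter a a' b b'
  · rcases hleaf with ⟨haa, hbb, hI⟩ | hnR
    · have hc : ((a, a', b, b') : ℕ × ℕ × ℕ × ℕ) = (i, i, j, j) := by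
        simp only [Prod.mk.injEq]; omega
      rw [hc] at hpsi
      exact ⟨hpsi, Or.inl ⟨rfl, rfl, hIJ⟩⟩
    · exact absurd ⟨i, j, hi1, hi2, hj1, hj2, hIJ⟩ hnR
  · by_cases hbb : b = b'
    · -- split P only
      have hg1 : 1 ≤ g := by
        rcases Nat.eq_zero_or_pos g with hg0 | hg1'
        · exfalso
          rw [hg0, hp0] at ha'
          refine hleaf (Or.inl ⟨by omega, hbb, ?_⟩)
          have hia : i = a := by omega
          have hjb : j = b := by omega
          rwa [hia, hjb] at hIJ
        · exact hg1'
      obtain ⟨hU, hL⟩ := halves_eq a g ha1 hg1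
      rw [← hga] at hU hL
      have hgg := two_pow_split hg1
      have hph : (2 : ℕ) ^ h = 1 := by
        rcases Nat.eq_zero_or_pos h with h0 | h1'
        · rw [h0, hp0]
        · exfalso
          have := (Nat.one_lt_two_pow_iff (n := h)).2 (by omega)
          omega
      by_cases hihalf : i ≤ a + 2 ^ (g - 1) - 1
      · exact ih (upperHalfHi a a' - a + (b' - b)) (by omega)
          (a, upperHalfHi a a', b, b') (by (try dsimp only); omega)
          (hpsi.tail ⟨hleaf, Or.inl ⟨hbb, Or.inl rfl⟩⟩)
          ⟨g - 1, 0, by omega, by omega, by (try dsimp only); omega,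
            by (try dsimp only); omega, by (try dsimp only); omega,
            by (try dsimp only); omega, by (try dsimp only); omega,
            by (try dsimp only); omega⟩
          i j hi1 (by (try dsimp only); omega) hj1 hj2 hIJ
      · exact ih (a' - lowerHalfLo a a' + (b' - b)) (by omega)
          (lowerHalfLo a a', a', b, b') (by (try dsimp only); omega)
          (hpsi.tail ⟨hleaf, Or.inl ⟨hbb, Or.inr rfl⟩⟩)
          ⟨g - 1, 0, by omega, by omega, by (try dsimp only); omega,
            by (try dsimp only); omega, by (try dsimp only); omega,
            by (try dsimp only); omega, by (try dsimp only); omega,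
            by (try dsimp only); omega⟩
          i j (by (try dsimp only); omega) hi2 hj1 hj2 hIJ
    · -- split both
      have hh1 : 1 ≤ h := by
        rcases Nat.eq_zero_or_pos h with h0 | h1'
        · rw [h0, hp0] at hb'; omega
        · exact h1'
      have hg1 : 1 ≤ g := le_trans hh1 hgh
      obtain ⟨hU, hL⟩ := halves_eq a g ha1 hg1
      obtain ⟨hUQ, hLQ⟩ := halves_eq b h hb1 hh1
      rw [← hga] at hU hL
      rw [← hhb] at hUQ hLQ
      have hgg := two_pow_split hg1
      have hhh := two_pow_split hh1
      have hbb' : b < b' := by omega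
      by_cases hihalf : i ≤ a + 2 ^ (g - 1) - 1 <;>
        by_cases hjhalf : j ≤ b + 2 ^ (h - 1) - 1
      · exact ih (upperHalfHi a a' - a + (upperHalfHi b b' - b)) (by omega)
          (a, upperHalfHi a a', b, upperHalfHi b b')
          (by (try dsimp only); omega)
          (hpsi.tail ⟨hleaf, Or.inr ⟨hbb', Or.inl rfl⟩⟩)
          ⟨g - 1, h - 1, by omega, by omega, by (try dsimp only); omega,
            by (try dsimp only); omega, by (try dsimp only); omega,
            by (try dsimp only); omega, by (try dsimp only); omega,
            by (try dsimp only); omega⟩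
          i j hi1 (by (try dsimp only); omega) hj1
          (by (try dsimp only); omega) hIJ
      · exact ih (upperHalfHi a a' - a + (b' - lowerHalfLo b b')) (by omega)
          (a, upperHalfHi a a', lowerHalfLo b b', b')
          (by (try dsimp only); omega)
          (hpsi.tail ⟨hleaf, Or.inr ⟨hbb', Or.inr (Or.inl rfl)⟩⟩)
          ⟨g - 1, h - 1, by omega, by omega, by (try dsimp only); omega,
            by (try dsimp only); omega, by (try dsimp only); omega,
            by (try dsimp only); omega, by (try dsimp only); omega,
            by (try dsimp only); omega⟩
          i j hi1 (by (try dsimp only); omega)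
          (by (try dsimp only); omega) hj2 hIJ
      · exact ih (a' - lowerHalfLo a a' + (upperHalfHi b b' - b)) (by omega)
          (lowerHalfLo a a', a', b, upperHalfHi b b')
          (by (try dsimp only); omega)
          (hpsi.tail ⟨hleaf, Or.inr ⟨hbb', Or.inr (Or.inr (Or.inl rfl))⟩⟩)
          ⟨g - 1, h - 1, by omega, by omega, by (try dsimp only); omega,
            by (try dsimp only); omega, by (try dsimp only); omega,
            by (try dsimp only); omega, by (try dsimp only); omega,
            by (try dsimp only); omega⟩
          i j (by (try dsimp only); omega) hi2 hj1
          (by (try dsimp only); omega) hIJ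
      · exact ih (a' - lowerHalfLo a a' + (b' - lowerHalfLo b b')) (by omega)
          (lowerHalfLo a a', a', lowerHalfLo b b', b')
          (by (try dsimp only); omega)
          (hpsi.tail ⟨hleaf, Or.inr ⟨hbb', Or.inr (Or.inr (Or.inr rfl))⟩⟩)
          ⟨g - 1, h - 1, by omega, by omega, by (try dsimp only); omega,
            by (try dsimp only); omega, by (try dsimp only); omega,
            by (try dsimp only); omega, by (try dsimp only); omega,
            by (try dsimp only); omega⟩
          i j (by (try dsimp only); omega) hi2
          (by (try dsimp only); omega) hj2 hIJ

/-- In the bisection setting (evolutionary trees `S₁,S₂` with the same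
label set, root paths `P'` of length `p' = 2^α + 1` and `Q'` of length `q' = 2^β + 1`
with `α, β ≥ 1` and `p' ≥ q'`), every intersecting pair `(xᵢ,y_j) ∈ (G ∪ E) − B`
satisfies `(x_{i+1},y_j) ∈ G ∪ E ∪ B`, `(xᵢ,y_{j+1}) ∈ G ∪ E ∪ B` and
`(x_{i+1},y_{j+1}) ∈ G ∪ E ∪ B`; that is, `(xᵢ,y_j)` has P-predecessor `(x_{i+1},y_j)`,
Q-predecessor `(xᵢ,y_{j+1})` and PQ-predecessor `(x_{i+1},y_{j+1})`. -/
theorem intersecting_predecessors {L : Type} [DecidableEq L] (P Q : RootPath L)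
    (hS₁ : ETree.IsEvolutionary P.tree) (hS₂ : ETree.IsEvolutionary Q.tree)
    (hlab : ETree.labelSet P.tree = ETree.labelSet Q.tree)
    (α β : ℕ) (hα : 1 ≤ α) (hβ : 1 ≤ β)
    (hp : P.len = 2 ^ α + 1) (hq : Q.len = 2 ^ β + 1) (hpq : Q.len ≤ P.len)
    (i j : ℕ)
    (hGE : InG P.len Q.len i j ∨ InE (Intersecting P Q) P.len Q.len i j)
    (hB : ¬ InB P.len Q.len i j)
    (hint : Intersecting P Q i j) :
    InGEB (Intersecting P Q) P.len Q.len (i + 1) j ∧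
    InGEB (Intersecting P Q) P.len Q.len i (j + 1) ∧
    InGEB (Intersecting P Q) P.len Q.len (i + 1) (j + 1) := by
  have h2α : 1 ≤ 2 ^ α := Nat.one_le_two_pow
  have h2β : 1 ≤ 2 ^ β := Nat.one_le_two_pow
  have hβα : β ≤ α := by
    have h2 : (2:ℕ) ^ β ≤ 2 ^ α := by omega
    exact (Nat.pow_le_pow_iff_right (by norm_num)).mp h2
  have hbnd : 1 ≤ i ∧ i ≤ 2 ^ α ∧ 1 ≤ j ∧ j ≤ 2 ^ β := by
    rcases hGE with hG | hE
    · rcases hG with ⟨hj, hi1, hi2⟩ | ⟨hi, hj1, hj2⟩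
      · refine ⟨hi1, ?_, by omega, by omega⟩
        by_contra hc
        exact hB (Or.inr ⟨by omega, by omega, by omega⟩)
      · refine ⟨by omega, by omega, hj1, ?_⟩
        by_contra hc
        exact hB (Or.inl ⟨by omega, by omega, by omega⟩)
    · obtain ⟨c, ⟨hcpsi, _⟩, hpos⟩ := hE
      obtain ⟨g, h, hgh, hgα, ha1, ha', haα, hb1, hb', hbβ⟩ :=
        psiInv_of_inPsi hβα hp hq hcpsi
      have h2g : 1 ≤ 2 ^ g := Nat.one_le_two_pow
      have h2h : 1 ≤ 2 ^ h := Nat.one_le_two_pow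
      have hib : 1 ≤ i ∧ i ≤ 2 ^ α + 1 ∧ 1 ≤ j ∧ j ≤ 2 ^ β + 1 := by
        rcases hpos with h1 | h1 | h1 | h1 <;>
          simp only [Prod.mk.injEq] at h1 <;> omega
      refine ⟨by omega, ?_, by omega, ?_⟩
      · by_contra hc
        exact hB (Or.inr ⟨by omega, by omega, by omega⟩)
      · by_contra hc
        exact hB (Or.inl ⟨by omega, by omega, by omega⟩)
  obtain ⟨hi1, hi2, hj1, hj2⟩ := hbnd
  have hroot : InPsi (Intersecting P Q) P.len Q.len (1, P.len - 1, 1, Q.len - 1) :=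
    Relation.ReflTransGen.refl
  have hlf := coverage (2 ^ α + 2 ^ β) (1, P.len - 1, 1, Q.len - 1)
    (by (try dsimp only); omega) hroot (psiInv_of_inPsi hβα hp hq hroot)
    i j (by (try dsimp only); omega) (by (try dsimp only); omega)
    (by (try dsimp only); omega) (by (try dsimp only); omega) hint
  exact ⟨Or.inr (Or.inl ⟨(i, i, j, j), hlf, Or.inr (Or.inl rfl)⟩),
    Or.inr (Or.inl ⟨(i, i, j, j), hlf, Or.inr (Or.inr (Or.inl rfl))⟩),
    Or.inr (Or.inl ⟨(i, i, j, j), hlf, Or.inr (Or.inr (Or.inr rfl))⟩)⟩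
end

section
/- In the bisection setting below, every nonintersecting pair (x_i, y_j) ∈ E − B has a P-predecessor (x_{i'}, y_j) and a Q-predecessor (x_i, y_{j'}), and moreover the pair of subpaths (P[i,i'−1], Q[j,j'−1]) is nonintersecting. -/
/-!
The leaves of Ψ tile the grid `[1, 2^α] × [1, 2^β]` of pairs `(x_a, y_b)` by products of dyadic
intervals: halving preserves dyadic intervals, and since the `Q`-interval of a node is never
longer than its `P`-interval, a node with a single `P`-index is a single pair, hence a leaf.
`E` is the set of corners of the tiles and an intersecting pair is a tile of its own, so it
suffices that no singleton tile other than `(xᵢ, y_j)` lies in `[i, i'-1] × [j, j'-1]`.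

As a corner, `(xᵢ, y_j)` lies on the left or the top edge of its tile `L`. If it is the top-left
corner of `L`, the corners of `L` bound `i'` and `j'`, and the rectangle lies in `L`. If it lies
inside the top edge, it is the lower-left corner of a tile `U` above, with dyadic `Q`-interval
`[j, j + 2^f - 1]`, and the lower-right corner of `U` gives `j' ≤ j + 2^f`. Since no corner lies
between `(xᵢ, y_j)` and `(x_{i'}, y_j)`, every tile met on the way contains `y_{j-1}` and `y_j`;
a dyadic interval crossing a multiple of `2^f` reaches `2^f` beyond it, so each row of the
rectangle lies in a tile that also contains a pair of column `j - 1`. The left edge is the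
transposed case.
-/

def InBox (c : ℕ × ℕ × ℕ × ℕ) (a b : ℕ) : Prop :=
  c.1 ≤ a ∧ a ≤ c.2.1 ∧ c.2.2.1 ≤ b ∧ b ≤ c.2.2.2

def transposeBox (c : ℕ × ℕ × ℕ × ℕ) : ℕ × ℕ × ℕ × ℕ := (c.2.2.1, c.2.2.2, c.1, c.2.1)

theorem inBox_transposeBox {c : ℕ × ℕ × ℕ × ℕ} {a b : ℕ} :
    InBox (transposeBox c) b a ↔ InBox c a b :=
  ⟨fun ⟨h₁, h₂, h₃, h₄⟩ => ⟨h₃, h₄, h₁, h₂⟩, fun ⟨h₁, h₂, h₃, h₄⟩ => ⟨h₃, h₄, h₁, h₂⟩⟩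

def IsHalf (lo hi lo' hi' : ℕ) : Prop :=
  (lo' = lo ∧ hi' = upperHalfHi lo hi) ∨ (lo' = lowerHalfLo lo hi ∧ hi' = hi)

namespace IsHalf

variable {lo hi lo' hi' x : ℕ}

theorem le_of_mem (h : IsHalf lo hi lo' hi') (hx : lo' ≤ x) (hx' : x ≤ hi') :
    lo ≤ x ∧ x ≤ hi := by
  unfold IsHalf upperHalfHi lowerHalfLo at h
  omega

theorem eq_of_mem {lo₂ hi₂ : ℕ} (h : IsHalf lo hi lo' hi') (h₂ : IsHalf lo hi lo₂ hi₂)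
    (hx : lo' ≤ x) (hx' : x ≤ hi') (hx₂ : lo₂ ≤ x) (hx₂' : x ≤ hi₂) :
    lo' = lo₂ ∧ hi' = hi₂ := by
  unfold IsHalf upperHalfHi lowerHalfLo at h h₂
  omega

theorem exists_mem (hx : lo ≤ x) (hx' : x ≤ hi) :
    ∃ lo' hi', IsHalf lo hi lo' hi' ∧ lo' ≤ x ∧ x ≤ hi' := by
  by_cases hup : x ≤ upperHalfHi lo hi
  · exact ⟨lo, _, Or.inl ⟨rfl, rfl⟩, hx, hup⟩
  · refine ⟨_, hi, Or.inr ⟨rfl, rfl⟩, ?_, hx'⟩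
    unfold upperHalfHi at hup
    unfold lowerHalfLo
    omega

end IsHalf

def DyadicInterval (e lo hi : ℕ) : Prop :=
  ∃ s, lo = s * 2 ^ e + 1 ∧ hi = (s + 1) * 2 ^ e

namespace DyadicInterval

variable {e lo hi : ℕ}

theorem one_le_lo (h : DyadicInterval e lo hi) : 1 ≤ lo := by
  obtain ⟨s, rfl, -⟩ := h
  omega

theorem hi_eq (h : DyadicInterval e lo hi) : hi = lo - 1 + 2 ^ e := by
  obtain ⟨s, rfl, rfl⟩ := h
  rw [Nat.add_sub_cancel, add_one_mul]

theorem lo_le_hi (h : DyadicInterval e lo hi) : lo ≤ hi := by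
  have := h.one_le_lo
  have := h.hi_eq
  have : 0 < 2 ^ e := by positivity
  omega

theorem dvd_lo_sub_one (h : DyadicInterval e lo hi) : 2 ^ e ∣ lo - 1 := by
  obtain ⟨s, rfl, -⟩ := h
  simp

theorem lo_eq_hi_iff (h : DyadicInterval e lo hi) : lo = hi ↔ e = 0 := by
  have := h.one_le_lo
  have h2 : 2 ^ e = 1 ↔ e = 0 := by simp
  rw [h.hi_eq, ← h2]
  omega

theorem add_le_hi (h : DyadicInterval e lo hi) {f m : ℕ} (hm : 2 ^ f ∣ m) (hlo : lo ≤ m)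
    (hhi : m < hi) : m + 2 ^ f ≤ hi := by
  obtain ⟨s, rfl, rfl⟩ := h
  rcases le_total e f with hef | hfe
  · obtain ⟨q, rfl⟩ := (pow_dvd_pow 2 hef).trans hm
    have h₁ : s < q := Nat.lt_of_mul_lt_mul_left (a := 2 ^ e) (by linarith)
    have h₂ : q < s + 1 := Nat.lt_of_mul_lt_mul_left (a := 2 ^ e) (by linarith)
    omega
  · have hdvd : 2 ^ f ∣ (s + 1) * 2 ^ e - m := Nat.dvd_sub ((pow_dvd_pow 2 hfe).mul_left _) hm
    have := Nat.le_of_dvd (by omega) hdvd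
    omega

theorem half (h : DyadicInterval (e + 1) lo hi) {lo' hi' : ℕ} (hh : IsHalf lo hi lo' hi') :
    DyadicInterval e lo' hi' := by
  obtain ⟨s, rfl, rfl⟩ := h
  rcases hh with ⟨rfl, rfl⟩ | ⟨rfl, rfl⟩
  · exact ⟨2 * s, by ring, by unfold upperHalfHi; rw [pow_succ]; ring_nf; omega⟩
  · exact ⟨2 * s + 1, by unfold lowerHalfLo; rw [pow_succ]; ring_nf; omega, by ring⟩

end DyadicInterval

section Psi

variable {Inter : ℕ → ℕ → Prop}

theorem isLeafPair_self {i j : ℕ} : IsLeafPair Inter i i j j := by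
  by_cases h : Inter i j
  · exact Or.inl ⟨rfl, rfl, h⟩
  · right
    rintro ⟨a, b, h₁, h₂, h₃, h₄, hab⟩
    obtain rfl : a = i := by omega
    obtain rfl : b = j := by omega
    exact h hab

theorem psiChild_iff {c d : ℕ × ℕ × ℕ × ℕ} :
    PsiChild Inter c d ↔ ¬ IsLeafPair Inter d.1 d.2.1 d.2.2.1 d.2.2.2 ∧
      IsHalf d.1 d.2.1 c.1 c.2.1 ∧
      ((d.2.2.1 = d.2.2.2 ∧ c.2.2.1 = d.2.2.1 ∧ c.2.2.2 = d.2.2.2) ∨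
        (d.2.2.1 < d.2.2.2 ∧ IsHalf d.2.2.1 d.2.2.2 c.2.2.1 c.2.2.2)) := by
  obtain ⟨c₁, c₂, c₃, c₄⟩ := c
  simp only [PsiChild, IsHalf, Prod.mk.injEq]
  constructor
  · rintro ⟨hnl, ⟨hE, ⟨rfl, rfl, rfl, rfl⟩ | ⟨rfl, rfl, rfl, rfl⟩⟩ | ⟨hL, ⟨rfl, rfl, rfl, rfl⟩ |
      ⟨rfl, rfl, rfl, rfl⟩ | ⟨rfl, rfl, rfl, rfl⟩ | ⟨rfl, rfl, rfl, rfl⟩⟩⟩ <;> simp_all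
  · rintro ⟨hnl, ⟨rfl, rfl⟩ | ⟨rfl, rfl⟩, ⟨hE, rfl, rfl⟩ | ⟨hL, ⟨rfl, rfl⟩ | ⟨rfl, rfl⟩⟩⟩ <;>
      simp_all

namespace PsiChild

variable {c d : ℕ × ℕ × ℕ × ℕ} {a b : ℕ}

theorem inBox (h : PsiChild Inter c d) (hc : InBox c a b) : InBox d a b := by
  obtain ⟨-, hP, hQ⟩ := psiChild_iff.mp h
  obtain ⟨h₁, h₂, h₃, h₄⟩ := hc
  refine ⟨(hP.le_of_mem h₁ h₂).1, (hP.le_of_mem h₁ h₂).2, ?_⟩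
  rcases hQ with ⟨-, e₃, e₄⟩ | ⟨-, hQ⟩
  · exact ⟨e₃ ▸ h₃, e₄ ▸ h₄⟩
  · exact hQ.le_of_mem h₃ h₄

theorem eq_of_inBox {c₂ : ℕ × ℕ × ℕ × ℕ} (h : PsiChild Inter c d) (h₂ : PsiChild Inter c₂ d)
    (hc : InBox c a b) (hc₂ : InBox c₂ a b) : c = c₂ := by
  obtain ⟨-, hP, hQ⟩ := psiChild_iff.mp h
  obtain ⟨-, hP₂, hQ₂⟩ := psiChild_iff.mp h₂
  obtain ⟨e₁, e₂⟩ := hP.eq_of_mem hP₂ hc.1 hc.2.1 hc₂.1 hc₂.2.1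
  have hQeq : c.2.2.1 = c₂.2.2.1 ∧ c.2.2.2 = c₂.2.2.2 := by
    rcases hQ with ⟨hd, e₃, e₄⟩ | ⟨hd, hQ⟩ <;> rcases hQ₂ with ⟨hd', e₃', e₄'⟩ | ⟨hd', hQ₂⟩
    · omega
    · omega
    · omega
    · exact hQ.eq_of_mem hQ₂ hc.2.2.1 hc.2.2.2 hc₂.2.2.1 hc₂.2.2.2
  exact Prod.ext e₁ (Prod.ext e₂ (Prod.ext hQeq.1 hQeq.2))

end PsiChild

theorem exists_psiChild_inBox {d : ℕ × ℕ × ℕ × ℕ} {a b : ℕ}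
    (hd : ¬ IsLeafPair Inter d.1 d.2.1 d.2.2.1 d.2.2.2) (hab : InBox d a b) :
    ∃ c, PsiChild Inter c d ∧ InBox c a b := by
  obtain ⟨h₁, h₂, h₃, h₄⟩ := hab
  obtain ⟨lo, hi, hP, hlo, hhi⟩ := IsHalf.exists_mem h₁ h₂
  rcases h₃.trans h₄ |>.eq_or_lt with hQ | hQ
  · exact ⟨(lo, hi, d.2.2.1, d.2.2.2), psiChild_iff.mpr ⟨hd, hP, Or.inl ⟨hQ, rfl, rfl⟩⟩,
      hlo, hhi, h₃, h₄⟩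
  · obtain ⟨lo', hi', hQ', hlo', hhi'⟩ := IsHalf.exists_mem h₃ h₄
    exact ⟨(lo, hi, lo', hi'), psiChild_iff.mpr ⟨hd, hP, Or.inr ⟨hQ, hQ'⟩⟩,
      hlo, hhi, hlo', hhi'⟩

def IsDyadicNode (M : ℕ) (c : ℕ × ℕ × ℕ × ℕ) : Prop :=
  ∃ N ≤ M, DyadicInterval M c.1 c.2.1 ∧ DyadicInterval N c.2.2.1 c.2.2.2

theorem IsDyadicNode.psiChild {M : ℕ} {c d : ℕ × ℕ × ℕ × ℕ} (hd : IsDyadicNode M d)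
    (h : PsiChild Inter c d) : ∃ M', M = M' + 1 ∧ IsDyadicNode M' c := by
  obtain ⟨N, hNM, hP, hQ⟩ := hd
  obtain ⟨hnl, hPc, hQc⟩ := psiChild_iff.mp h
  obtain _ | M' := M
  · obtain rfl : N = 0 := by omega
    refine absurd ?_ hnl
    rw [hP.lo_eq_hi_iff.mpr rfl, hQ.lo_eq_hi_iff.mpr rfl]
    exact isLeafPair_self
  refine ⟨M', rfl, ?_⟩
  rcases hQc with ⟨hd, e₃, e₄⟩ | ⟨hd, hQh⟩
  · obtain rfl : N = 0 := hQ.lo_eq_hi_iff.mp hd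
    exact ⟨0, M'.zero_le, hP.half hPc, by rw [e₃, e₄]; exact hQ⟩
  · obtain _ | N' := N
    · exact absurd (hQ.lo_eq_hi_iff.mpr rfl) hd.ne
    · exact ⟨N', by omega, hP.half hPc, hQ.half hQh⟩

namespace PsiDesc

variable {x y : ℕ × ℕ × ℕ × ℕ} {a b : ℕ}

theorem inBox (h : PsiDesc Inter x y) (hy : InBox y a b) : InBox x a b := by
  induction h with
  | refl => exact hy
  | tail _ hc ih => exact ih (hc.inBox hy)

theorem exists_leaf {M : ℕ} (hx : IsDyadicNode M x) (hab : InBox x a b) :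
    ∃ l, PsiDesc Inter x l ∧ IsLeafPair Inter l.1 l.2.1 l.2.2.1 l.2.2.2 ∧ InBox l a b := by
  induction M using Nat.strong_induction_on generalizing x with
  | _ M ih =>
    by_cases hl : IsLeafPair Inter x.1 x.2.1 x.2.2.1 x.2.2.2
    · exact ⟨x, .refl, hl, hab⟩
    obtain ⟨c, hc, hcab⟩ := exists_psiChild_inBox hl hab
    obtain ⟨M', rfl, hM'⟩ := hx.psiChild hc
    obtain ⟨l, hcl, hl, hlab⟩ := ih M' (by omega) hM' hcab
    exact ⟨l, .head hc hcl, hl, hlab⟩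

theorem eq_of_isLeafPair {l₁ l₂ : ℕ × ℕ × ℕ × ℕ} (h₁ : PsiDesc Inter x l₁)
    (h₂ : PsiDesc Inter x l₂)
    (hl₁ : IsLeafPair Inter l₁.1 l₁.2.1 l₁.2.2.1 l₁.2.2.2)
    (hl₂ : IsLeafPair Inter l₂.1 l₂.2.1 l₂.2.2.1 l₂.2.2.2)
    (hab₁ : InBox l₁ a b) (hab₂ : InBox l₂ a b) : l₁ = l₂ := by
  induction h₁ using Relation.ReflTransGen.head_induction_on with
  | refl =>
    rcases h₂.cases_head with rfl | ⟨c, hc, -⟩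
    · rfl
    · exact absurd hl₁ hc.1
  | head hxc hcl ih =>
    rcases h₂.cases_head with rfl | ⟨c₂, hxc₂, hc₂l⟩
    · exact absurd hl₂ hxc.1
    · obtain rfl := hxc.eq_of_inBox hxc₂ (inBox hcl hab₁) (inBox hc₂l hab₂)
      exact ih hc₂l

end PsiDesc

end Psi

def IsTileCorner (T : ℕ × ℕ × ℕ × ℕ → Prop) (a b : ℕ) : Prop :=
  ∃ c, T c ∧ (a = c.1 ∨ a = c.2.1 + 1) ∧ (b = c.2.2.1 ∨ b = c.2.2.2 + 1)

theorem isTileCorner_transposeBox {T : ℕ × ℕ × ℕ × ℕ → Prop} {a b : ℕ} :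
    IsTileCorner (fun c => T (transposeBox c)) b a ↔ IsTileCorner T a b :=
  ⟨fun ⟨c, hc, hb, ha⟩ => ⟨transposeBox c, hc, ha, hb⟩,
    fun ⟨c, hc, ha, hb⟩ => ⟨transposeBox c, hc, hb, ha⟩⟩

structure IsDyadicTiling (T : ℕ × ℕ × ℕ × ℕ → Prop) (W H : ℕ) : Prop where
  exists_inBox : ∀ a b, 1 ≤ a → a ≤ W → 1 ≤ b → b ≤ H → ∃ c, T c ∧ InBox c a b
  eq_of_inBox : ∀ {c₁ c₂ a b}, T c₁ → T c₂ → InBox c₁ a b → InBox c₂ a b → c₁ = c₂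
  dyadic : ∀ {c}, T c → (∃ e, DyadicInterval e c.1 c.2.1) ∧ ∃ e, DyadicInterval e c.2.2.1 c.2.2.2
  le_size : ∀ {c}, T c → c.2.1 ≤ W ∧ c.2.2.2 ≤ H

namespace IsDyadicTiling

variable {T : ℕ × ℕ × ℕ × ℕ → Prop} {W H : ℕ} (hT : IsDyadicTiling T W H)
include hT

theorem transpose : IsDyadicTiling (fun c => T (transposeBox c)) H W where
  exists_inBox a b ha ha' hb hb' :=
    let ⟨c, hc, hcab⟩ := hT.exists_inBox b a hb hb' ha ha'
    ⟨transposeBox c, hc, inBox_transposeBox.mpr hcab⟩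
  eq_of_inBox h₁ h₂ hab₁ hab₂ :=
    congrArg transposeBox
      (hT.eq_of_inBox h₁ h₂ (inBox_transposeBox.mpr hab₁) (inBox_transposeBox.mpr hab₂))
  dyadic h := ⟨(hT.dyadic h).2, (hT.dyadic h).1⟩
  le_size h := ⟨(hT.le_size h).2, (hT.le_size h).1⟩

theorem bounds_of_tile {c : ℕ × ℕ × ℕ × ℕ} (hc : T c) :
    1 ≤ c.1 ∧ c.1 ≤ c.2.1 ∧ c.2.1 ≤ W ∧ 1 ≤ c.2.2.1 ∧ c.2.2.1 ≤ c.2.2.2 ∧ c.2.2.2 ≤ H := by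
  obtain ⟨⟨e, hP⟩, ⟨f, hQ⟩⟩ := hT.dyadic hc
  exact ⟨hP.one_le_lo, hP.lo_le_hi, (hT.le_size hc).1, hQ.one_le_lo, hQ.lo_le_hi,
    (hT.le_size hc).2⟩

theorem bounds_of_isTileCorner {a b : ℕ} (hab : IsTileCorner T a b) :
    1 ≤ a ∧ a ≤ W + 1 ∧ 1 ≤ b ∧ b ≤ H + 1 := by
  obtain ⟨c, hc, ha, hb⟩ := hab
  have := hT.bounds_of_tile hc
  omega

theorem left_eq_or_top_eq {i j : ℕ} {L : ℕ × ℕ × ℕ × ℕ} (hij : IsTileCorner T i j) (hL : T L)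
    (hLij : InBox L i j) : L.1 = i ∨ L.2.2.1 = j := by
  obtain ⟨c, hc, hi, hj⟩ := hij
  have := hT.bounds_of_tile hc
  obtain ⟨hL₁, hL₂, hL₃, hL₄⟩ := hLij
  by_contra! h
  -- `(min i c.2.1, min j c.2.2.2)` is a cell of `c` adjacent to the corner, hence in `L`
  obtain rfl : c = L := hT.eq_of_inBox (a := min i c.2.1) (b := min j c.2.2.2) hc hL
    ⟨by omega, by omega, by omega, by omega⟩ ⟨by omega, by omega, by omega, by omega⟩
  omega

theorem exists_tile_above {i j : ℕ} {L : ℕ × ℕ × ℕ × ℕ} (hij : IsTileCorner T i j) (hL : T L)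
    (hLij : InBox L i j) (hL₁ : L.1 = i) (hL₃ : L.2.2.1 < j) :
    ∃ U, T U ∧ U.2.1 + 1 = i ∧ U.2.2.1 = j := by
  obtain ⟨c, hc, hi, hj⟩ := hij
  have hcb := hT.bounds_of_tile hc
  have hLb := hT.bounds_of_tile hL
  have ⟨hLi, hL₂, hLj, hL₄⟩ := hLij
  rcases hi with hi | hi
  · exfalso
    obtain rfl : c = L := hT.eq_of_inBox (a := i) (b := min j c.2.2.2) hc hL
      ⟨by omega, by omega, by omega, by omega⟩ ⟨by omega, by omega, by omega, by omega⟩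
    omega
  rcases hj with hj | hj
  · exact ⟨c, hc, hi.symm, hj.symm⟩
  obtain ⟨U, hU, hU₁, hU₂, hU₃, hU₄⟩ := hT.exists_inBox (i - 1) j (by omega) (by omega)
    (by omega) (by omega)
  refine ⟨U, hU, ?_, ?_⟩
  · by_contra
    obtain rfl : U = L := hT.eq_of_inBox (a := i) (b := j) hU hL
      ⟨by omega, by omega, by omega, by omega⟩ ⟨by omega, by omega, by omega, by omega⟩
    omega
  · by_contra
    obtain rfl : U = c := hT.eq_of_inBox (a := i - 1) (b := j - 1) hU hc
      ⟨by omega, by omega, by omega, by omega⟩ ⟨by omega, by omega, by omega, by omega⟩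
    omega

theorem exists_tile_crossing {i i' j : ℕ} {L : ℕ × ℕ × ℕ × ℕ} (hi'W : i' ≤ W + 1)
    (hi' : ∀ a, i < a → a < i' → ¬ IsTileCorner T a j) (hL : T L) (hLi : InBox L i (j - 1))
    (hLj : InBox L i j) :
    ∀ a, i ≤ a → a < i' → ∃ c, T c ∧ InBox c a (j - 1) ∧ InBox c a j := by
  have hLb := hT.bounds_of_tile hL
  have hj₁ := hLi.2.2.1
  have hjL := hLj.2.2.2
  intro a hia
  induction a, hia using Nat.le_induction with
  | base => exact fun _ => ⟨L, hL, hLi, hLj⟩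
  | succ a hia ih =>
    intro ha
    obtain ⟨c, hc, hca, hcb⟩ := ih (by omega)
    obtain ⟨c', hc', hc'b⟩ := hT.exists_inBox (a + 1) j (by omega) (by omega) (by omega)
      (by omega)
    obtain ⟨h₁, h₂, h₃, h₄⟩ := hc'b
    by_cases hc'₃ : c'.2.2.1 ≤ j - 1
    · exact ⟨c', hc', ⟨h₁, h₂, hc'₃, by omega⟩, h₁, h₂, h₃, h₄⟩
    exfalso
    rcases (by omega : c'.1 = a + 1 ∨ c'.1 ≤ a) with hc'₁ | hc'₁
    · exact hi' (a + 1) (by omega) ha ⟨c', hc', Or.inl hc'₁.symm, Or.inl (by omega)⟩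
    · obtain rfl : c' = c := hT.eq_of_inBox hc' hc ⟨hc'₁, by omega, by omega, h₄⟩ hcb
      exact hc'₃ hca.2.2.1

theorem not_singleton_of_top_edge {i i' j j' : ℕ} {L : ℕ × ℕ × ℕ × ℕ} (hij : IsTileCorner T i j)
    (hi'W : i' ≤ W + 1) (hi' : ∀ a, i < a → a < i' → ¬ IsTileCorner T a j)
    (hj' : ∀ b, j < b → b < j' → ¬ IsTileCorner T i b) (hL : T L) (hLij : InBox L i j)
    (hL₁ : L.1 = i) (hL₃ : L.2.2.1 < j) {k r : ℕ} (hik : i ≤ k) (hki' : k < i') (hjr : j ≤ r)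
    (hrj' : r < j') : ¬ T (k, k, r, r) := by
  have hLb := hT.bounds_of_tile hL
  have hjL := hLij.2.2.2
  obtain ⟨U, hU, hU₂, hU₃⟩ := hT.exists_tile_above hij hL hLij hL₁ hL₃
  obtain ⟨f, hUQ⟩ := (hT.dyadic hU).2
  have hf : 2 ^ f ∣ j - 1 := hU₃ ▸ hUQ.dvd_lo_sub_one
  have hj'U : j' ≤ j + 2 ^ f := by
    by_contra!
    have := hUQ.hi_eq
    exact hj' (U.2.2.2 + 1) (by omega) (by omega) ⟨U, hU, Or.inr hU₂.symm, Or.inr rfl⟩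
  obtain ⟨c, hc, ⟨hc₁, hc₂, hc₃, -⟩, -, -, -, hc₄⟩ := hT.exists_tile_crossing hi'W hi' hL
    ⟨hLij.1, hLij.2.1, by omega, by omega⟩ hLij k hik hki'
  obtain ⟨e, hcQ⟩ := (hT.dyadic hc).2
  have hcr : j - 1 + 2 ^ f ≤ c.2.2.2 := hcQ.add_le_hi hf hc₃ (by omega)
  intro hkr
  obtain rfl : c = (k, k, r, r) := hT.eq_of_inBox (a := k) (b := r) hc hkr
    ⟨hc₁, hc₂, by omega, by omega⟩ ⟨le_rfl, le_rfl, le_rfl, le_rfl⟩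
  exact absurd hc₃ (by dsimp only; omega)

theorem eq_of_singleton_mem_span {i i' j j' : ℕ} (hij : IsTileCorner T i j) (hiW : i ≤ W)
    (hjH : j ≤ H) (hi'W : i' ≤ W + 1) (hj'H : j' ≤ H + 1)
    (hi' : ∀ a, i < a → a < i' → ¬ IsTileCorner T a j)
    (hj' : ∀ b, j < b → b < j' → ¬ IsTileCorner T i b) {k r : ℕ} (hik : i ≤ k) (hki' : k < i')
    (hjr : j ≤ r) (hrj' : r < j') (hkr : T (k, k, r, r)) : k = i ∧ r = j := by
  obtain ⟨hi, -, hj, -⟩ := hT.bounds_of_isTileCorner hij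
  obtain ⟨L, hL, hLij⟩ := hT.exists_inBox i j hi hiW hj hjH
  have hLb := hT.bounds_of_tile hL
  have hLedge := hT.left_eq_or_top_eq hij hL hLij
  have ⟨hLi, hL₂, hLj, hL₄⟩ := hLij
  rcases (by omega : (L.1 = i ∧ L.2.2.1 = j) ∨ (L.1 = i ∧ L.2.2.1 < j) ∨
    (L.1 < i ∧ L.2.2.1 = j)) with ⟨hL₁, hL₃⟩ | ⟨hL₁, hL₃⟩ | ⟨hL₁, hL₃⟩
  · have hi'L : i' ≤ L.2.1 + 1 := by
      by_contra!
      exact hi' _ (by omega) this ⟨L, hL, Or.inr rfl, Or.inl hL₃.symm⟩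
    have hj'L : j' ≤ L.2.2.2 + 1 := by
      by_contra!
      exact hj' _ (by omega) this ⟨L, hL, Or.inl hL₁.symm, Or.inr rfl⟩
    obtain rfl : L = (k, k, r, r) := hT.eq_of_inBox (a := k) (b := r) hL hkr
      ⟨by omega, by omega, by omega, by omega⟩ ⟨le_rfl, le_rfl, le_rfl, le_rfl⟩
    exact ⟨hL₁, hL₃⟩
  · exact absurd hkr (hT.not_singleton_of_top_edge hij hi'W hi' hj' hL hLij hL₁ hL₃ hik hki'
      hjr hrj')
  · exact absurd hkr (hT.transpose.not_singleton_of_top_edge (isTileCorner_transposeBox.mpr hij)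
      hj'H (fun b h₁ h₂ h => hj' b h₁ h₂ (isTileCorner_transposeBox.mp h))
      (fun a h₁ h₂ h => hi' a h₁ h₂ (isTileCorner_transposeBox.mp h)) (L := transposeBox L) hL
      (inBox_transposeBox.mpr hLij) hL₃ hL₁ hjr hrj' hik hki')

end IsDyadicTiling

section PsiTiling

variable (Inter : ℕ → ℕ → Prop) {α β : ℕ}

theorem inE_iff_isTileCorner {p' q' a b : ℕ} :
    InE Inter p' q' a b ↔ IsTileCorner (IsPsiLeaf Inter p' q') a b := by
  simp only [InE, IsTileCorner, Prod.mk.injEq]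
  exact exists_congr fun c => and_congr_right fun _ => by tauto

variable {Inter}

theorem InPsi.isDyadicNode (hβα : β ≤ α) {c : ℕ × ℕ × ℕ × ℕ}
    (h : InPsi Inter (2 ^ α + 1) (2 ^ β + 1) c) : ∃ M, IsDyadicNode M c := by
  induction h with
  | refl => exact ⟨α, β, hβα, ⟨0, by simp, by simp⟩, ⟨0, by simp, by simp⟩⟩
  | tail _ hc ih =>
    obtain ⟨M, hM⟩ := ih
    obtain ⟨M', -, hM'⟩ := hM.psiChild hc
    exact ⟨M', hM'⟩

variable (Inter)

theorem isDyadicTiling_isPsiLeaf (hβα : β ≤ α) :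
    IsDyadicTiling (IsPsiLeaf Inter (2 ^ α + 1) (2 ^ β + 1)) (2 ^ α) (2 ^ β) where
  exists_inBox a b ha ha' hb hb' := by
    obtain ⟨M, hM⟩ := InPsi.isDyadicNode (Inter := Inter) hβα .refl
    obtain ⟨l, hl, hleaf, hlab⟩ := PsiDesc.exists_leaf (a := a) (b := b) hM
      ⟨ha, by simpa using ha', hb, by simpa using hb'⟩
    exact ⟨l, ⟨hl, hleaf⟩, hlab⟩
  eq_of_inBox h₁ h₂ hab₁ hab₂ := PsiDesc.eq_of_isLeafPair h₁.1 h₂.1 h₁.2 h₂.2 hab₁ hab₂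
  dyadic h := by
    obtain ⟨M, N, -, hP, hQ⟩ := InPsi.isDyadicNode hβα h.1
    exact ⟨⟨M, hP⟩, ⟨N, hQ⟩⟩
  le_size {l} h := by
    obtain ⟨M, N, -, hP, hQ⟩ := InPsi.isDyadicNode hβα h.1
    have := PsiDesc.inBox h.1 ⟨hP.lo_le_hi, le_rfl, hQ.lo_le_hi, le_rfl⟩
    simpa using And.intro this.2.1 this.2.2.2

theorem isPsiLeaf_singleton (hβα : β ≤ α) {a b : ℕ} (ha : 1 ≤ a) (ha' : a ≤ 2 ^ α)
    (hb : 1 ≤ b) (hb' : b ≤ 2 ^ β) (hab : Inter a b) :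
    IsPsiLeaf Inter (2 ^ α + 1) (2 ^ β + 1) (a, a, b, b) := by
  obtain ⟨l, hl, hlab⟩ := (isDyadicTiling_isPsiLeaf Inter hβα).exists_inBox a b ha ha' hb hb'
  obtain ⟨h₁, h₂, h₃, h₄⟩ := hlab
  rcases hl.2 with ⟨e₁, e₂, -⟩ | hne
  · obtain ⟨l₁, l₂, l₃, l₄⟩ := l
    dsimp only at *
    obtain rfl : l₁ = a := by omega
    obtain rfl : l₂ = l₁ := by omega
    obtain rfl : l₃ = b := by omega
    obtain rfl : l₄ = l₃ := by omega
    exact hl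
  · exact absurd ⟨a, b, h₁, h₂, h₃, h₄, hab⟩ hne

end PsiTiling

theorem exists_least_gt {p : ℕ → Prop} {i n : ℕ} (hin : i < n) (hn : p n) :
    ∃ m, i < m ∧ p m ∧ (∀ k, i < k → p k → m ≤ k) ∧ m ≤ n := by
  classical
  have h : ∃ m, i < m ∧ p m := ⟨n, hin, hn⟩
  exact ⟨Nat.find h, (Nat.find_spec h).1, (Nat.find_spec h).2,
    fun k hk hpk => Nat.find_min' h ⟨hk, hpk⟩, Nat.find_min' h ⟨hin, hn⟩⟩

theorem nonintersecting_predecessors_general {L : Type} [DecidableEq L] (P Q : RootPath L)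
    (α β : ℕ)
    (hp : P.len = 2 ^ α + 1) (hq : Q.len = 2 ^ β + 1) (hpq : Q.len ≤ P.len)
    (i j : ℕ)
    (hE : InE (Intersecting P Q) P.len Q.len i j)
    (hB : ¬ InB P.len Q.len i j)
    (hnon : ¬ Intersecting P Q i j) :
    ∃ i', i < i' ∧ InGEB (Intersecting P Q) P.len Q.len i' j ∧
      (∀ k, i < k → InGEB (Intersecting P Q) P.len Q.len k j → i' ≤ k) ∧
    ∃ j', j < j' ∧ InGEB (Intersecting P Q) P.len Q.len i j' ∧
      (∀ k, j < k → InGEB (Intersecting P Q) P.len Q.len i k → j' ≤ k) ∧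
      ¬ RectInter (Intersecting P Q) i (i' - 1) j (j' - 1) := by
  rw [hp, hq] at hpq hE hB ⊢
  have hβα : β ≤ α := (pow_le_pow_iff_right₀ (one_lt_two (α := ℕ))).mp (by omega)
  have hT := isDyadicTiling_isPsiLeaf (Intersecting P Q) hβα
  have hij := (inE_iff_isTileCorner _).mp hE
  obtain ⟨hi, hiW, hj, hjH⟩ := hT.bounds_of_isTileCorner hij
  simp only [InB, not_or] at hB
  obtain ⟨i', hii', hi'GEB, hi'min, hi'W⟩ := exists_least_gt (p := fun a => InGEB _ _ _ a j)
    (by omega : i < 2 ^ α + 1) (Or.inr (Or.inr (Or.inr ⟨rfl, hj, hjH⟩)))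
  obtain ⟨j', hjj', hj'GEB, hj'min, hj'H⟩ := exists_least_gt (p := fun b => InGEB _ _ _ i b)
    (by omega : j < 2 ^ β + 1) (Or.inr (Or.inr (Or.inl ⟨rfl, hi, hiW⟩)))
  refine ⟨i', hii', hi'GEB, hi'min, j', hjj', hj'GEB, hj'min, ?_⟩
  rintro ⟨k, r, hik, hki', hjr, hrj', hkr⟩
  obtain ⟨rfl, rfl⟩ := hT.eq_of_singleton_mem_span hij (by omega) (by omega) hi'W hj'H
    (fun a h₁ h₂ ha => (hi'min a h₁ (.inr (.inl ((inE_iff_isTileCorner _).mpr ha)))).not_gt h₂)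
    (fun b h₁ h₂ hb => (hj'min b h₁ (.inr (.inl ((inE_iff_isTileCorner _).mpr hb)))).not_gt h₂)
    hik (by omega) hjr (by omega)
    (isPsiLeaf_singleton _ hβα (by omega) (by omega) (by omega) (by omega) hkr)
  exact hnon hkr

/-- In the bisection setting, every nonintersecting pair
`(xᵢ,y_j) ∈ E − B` has a P-predecessor `(x_{i'},y_j)` (the smallest `i' > i` with
`(x_{i'},y_j) ∈ G ∪ E ∪ B`) and a Q-predecessor `(xᵢ,y_{j'})` (the smallest `j' > j`
with `(xᵢ,y_{j'}) ∈ G ∪ E ∪ B`), and moreover the pair of subpaths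
`(P[i,i'−1], Q[j,j'−1])` is nonintersecting. -/
theorem nonintersecting_predecessors {L : Type} [DecidableEq L] (P Q : RootPath L)
    (hS₁ : ETree.IsEvolutionary P.tree) (hS₂ : ETree.IsEvolutionary Q.tree)
    (hlab : ETree.labelSet P.tree = ETree.labelSet Q.tree)
    (α β : ℕ) (hα : 1 ≤ α) (hβ : 1 ≤ β)
    (hp : P.len = 2 ^ α + 1) (hq : Q.len = 2 ^ β + 1) (hpq : Q.len ≤ P.len)
    (i j : ℕ)
    (hE : InE (Intersecting P Q) P.len Q.len i j)
    (hB : ¬ InB P.len Q.len i j)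
    (hnon : ¬ Intersecting P Q i j) :
    ∃ i', i < i' ∧ InGEB (Intersecting P Q) P.len Q.len i' j ∧
      (∀ k, i < k → InGEB (Intersecting P Q) P.len Q.len k j → i' ≤ k) ∧
    ∃ j', j < j' ∧ InGEB (Intersecting P Q) P.len Q.len i j' ∧
      (∀ k, j < k → InGEB (Intersecting P Q) P.len Q.len i k → j' ≤ k) ∧
      ¬ RectInter (Intersecting P Q) i (i' - 1) j (j' - 1) :=
  nonintersecting_predecessors_general P Q α β hp hq hpq i j hE hB hnon
end

section
/- In the bisection setting below, for every pair (P[i1,i2], y_j) ∈ Ψ, the set of indices i such that (x_i, y_j) is the ceiling of a leaf of Ψ that is (P[i1,i2],y_j) itself or one of its descendants regularly partitions the interval [i1,i2]; likewise, the set of indices i such that (x_i, y_{j+1}) is the Q-diagonal of such a leaf regularly partitions [i1,i2]. -/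
/-- Regular integer intervals `[k₁, k₂]`:
`[1, 2^α]` is regular for every `α ≥ 0`, and the upper half `[k₁, (k₁+k₂−1)/2]`
and lower half `[(k₁+k₂+1)/2, k₂]` of every even-length regular interval are regular. -/
inductive Regular : ℕ → ℕ → Prop where
  | base (α : ℕ) : Regular 1 (2 ^ α)
  | upper {k₁ k₂ : ℕ} (h : Regular k₁ k₂) (heven : Even (k₂ - k₁ + 1)) :
      Regular k₁ ((k₁ + k₂ - 1) / 2)
  | lower {k₁ k₂ : ℕ} (h : Regular k₁ k₂) (heven : Even (k₂ - k₁ + 1)) :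
      Regular ((k₁ + k₂ + 1) / 2) k₂

/-- A set `H = {h₁ < h₂ < ⋯ < h_k}` regularly partitions a regular interval `[i₁,i₂]` if
`h₁ = i₁` and the intervals `[h₁,h₂−1], …, [h_{k−1},h_k−1], [h_k,i₂]` are all regular.
(For consecutive members `h < h'` of `H`, the interval `[h, h'−1]` is regular, and for
the largest member `h`, the interval `[h, i₂]` is regular.) -/
def RegularlyPartitions (H : Set ℕ) (i₁ i₂ : ℕ) : Prop :=
  i₁ ∈ H ∧ (∀ h ∈ H, i₁ ≤ h ∧ h ≤ i₂) ∧
  (∀ h ∈ H, ∀ h' ∈ H, h < h' → (∀ h'' ∈ H, h'' ≤ h ∨ h' ≤ h'') → Regular h (h' - 1)) ∧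
  (∀ h ∈ H, (∀ h'' ∈ H, h'' ≤ h) → Regular h i₂)

/-! ### Auxiliary lemmas -/

/-- Every pair `(P[i,i], y_j)` with singleton `P`-interval is a leaf pair. -/
lemma leaf_of_singleton (Inter : ℕ → ℕ → Prop) (a j : ℕ) :
    IsLeafPair Inter a a j j := by
  by_cases h : Inter a j
  · exact Or.inl ⟨rfl, rfl, h⟩
  · refine Or.inr ?_
    rintro ⟨x, y, hx1, hx2, hy1, hy2, hxy⟩
    have hx : x = a := le_antisymm hx2 hx1
    have hy : y = j := le_antisymm hy2 hy1
    subst hx; subst hy; exact h hxy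

/-- A regular interval starts at a positive index and has power-of-two length. -/
lemma regular_facts : ∀ {k₁ k₂ : ℕ}, Regular k₁ k₂ →
    1 ≤ k₁ ∧ ∃ m, k₂ + 1 = k₁ + 2 ^ m := by
  intro k₁ k₂ h
  induction h with
  | base α => exact ⟨le_refl 1, α, by omega⟩
  | @upper k₁ k₂ h heven ih =>
    obtain ⟨h1, m, hm⟩ := ih
    obtain ⟨r, hr⟩ := heven
    match m with
    | 0 =>
      exfalso
      have h0 : (2 : ℕ) ^ 0 = 1 := pow_zero 2
      omega
    | m + 1 =>
      refine ⟨h1, m, ?_⟩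
      have h2 : (2 : ℕ) ^ (m + 1) = 2 * 2 ^ m := by rw [pow_succ]; ring
      omega
  | @lower k₁ k₂ h heven ih =>
    obtain ⟨h1, m, hm⟩ := ih
    obtain ⟨r, hr⟩ := heven
    match m with
    | 0 =>
      exfalso
      have h0 : (2 : ℕ) ^ 0 = 1 := pow_zero 2
      omega
    | m + 1 =>
      have h2 : (2 : ℕ) ^ (m + 1) = 2 * 2 ^ m := by rw [pow_succ]; ring
      refine ⟨?_, m, ?_⟩ <;> omega

/-- Children in Ψ of a pair with equal `Q`-indices. -/
lemma psiChild_cases {Inter : ℕ → ℕ → Prop} {c : ℕ × ℕ × ℕ × ℕ} {a b j : ℕ}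
    (h : PsiChild Inter c (a, b, j, j)) :
    ¬ IsLeafPair Inter a b j j ∧
      (c = (a, upperHalfHi a b, j, j) ∨ c = (lowerHalfLo a b, b, j, j)) := by
  obtain ⟨hnl, hcase⟩ := h
  refine ⟨hnl, ?_⟩
  rcases hcase with ⟨_, hc⟩ | ⟨hlt, _⟩
  · exact hc
  · exact absurd hlt (lt_irrefl j)

/-- Every descendant of a pair with equal `Q`-indices has the same `Q`-indices. -/
lemma desc_shape {Inter : ℕ → ℕ → Prop} {a b j : ℕ} :
    ∀ {c}, PsiDesc Inter (a, b, j, j) c → c.2.2.1 = j ∧ c.2.2.2 = j := by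
  intro c h
  induction h with
  | refl => exact ⟨rfl, rfl⟩
  | @tail mid c' hab hbc ih =>
    obtain ⟨m1, m2, m3, m4⟩ := mid
    obtain ⟨h1, h2⟩ := ih
    simp only at h1 h2
    subst h1; subst h2
    obtain ⟨_, hc⟩ := psiChild_cases hbc
    rcases hc with h | h <;> subst h <;> exact ⟨rfl, rfl⟩

/-- If the root pair of the sub-bisection is a leaf, the ceiling index set is `{a}`. -/
lemma rp_leaf_case (Inter : ℕ → ℕ → Prop) (j a b : ℕ) (hab : a ≤ b)
    (hreg : Regular a b) (hleaf : IsLeafPair Inter a b j j) :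
    RegularlyPartitions
      {i | ∃ c : ℕ × ℕ × ℕ × ℕ, PsiDesc Inter (a, b, j, j) c ∧
        IsLeafPair Inter c.1 c.2.1 c.2.2.1 c.2.2.2 ∧ c.1 = i} a b := by
  have hS : ∀ i, (∃ c : ℕ × ℕ × ℕ × ℕ, PsiDesc Inter (a, b, j, j) c ∧
      IsLeafPair Inter c.1 c.2.1 c.2.2.1 c.2.2.2 ∧ c.1 = i) → i = a := by
    rintro i ⟨c, hdesc, _, hi⟩
    rcases Relation.ReflTransGen.cases_head hdesc with heq | ⟨d, hd, _⟩
    · subst heq; exact hi.symm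
    · exact absurd hleaf (psiChild_cases hd).1
  refine ⟨⟨(a, b, j, j), Relation.ReflTransGen.refl, hleaf, rfl⟩, ?_, ?_, ?_⟩
  · intro h hh
    have := hS h hh
    omega
  · intro h hh h' hh' hlt _
    have := hS h hh
    have := hS h' hh'
    omega
  · intro h hh _
    have := hS h hh
    subst this
    exact hreg

/-- Gluing two regular partitions of adjacent intervals. -/
lemma rp_union {S₁ S₂ : Set ℕ} {a mid b : ℕ} (hmb : mid < b)
    (h₁ : RegularlyPartitions S₁ a mid) (h₂ : RegularlyPartitions S₂ (mid + 1) b) :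
    RegularlyPartitions (S₁ ∪ S₂) a b := by
  obtain ⟨ha1, hb1, hc1, hd1⟩ := h₁
  obtain ⟨ha2, hb2, hc2, hd2⟩ := h₂
  have hamid : a ≤ mid := (hb1 a ha1).2
  refine ⟨Or.inl ha1, ?_, ?_, ?_⟩
  · rintro h (h1 | h2)
    · have := hb1 h h1; omega
    · have := hb2 h h2; omega
  · rintro h (hh1 | hh2) h' (hh'1 | hh'2) hlt hcons
    · exact hc1 h hh1 h' hh'1 hlt fun h'' hh'' => hcons h'' (Or.inl hh'')
    · have hh'lo : mid + 1 ≤ h' := (hb2 h' hh'2).1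
      have hhmid : h ≤ mid := (hb1 h hh1).2
      have hcm := hcons (mid + 1) (Or.inr ha2)
      have hh'eq : h' = mid + 1 := by omega
      have hmax : ∀ h'' ∈ S₁, h'' ≤ h := by
        intro h'' hh''
        have := hcons h'' (Or.inl hh'')
        have := (hb1 h'' hh'').2
        omega
      have hr := hd1 h hh1 hmax
      have hm1 : h' - 1 = mid := by omega
      rwa [hm1]
    · have := (hb2 h hh2).1
      have := (hb1 h' hh'1).2
      omega
    · exact hc2 h hh2 h' hh'2 hlt fun h'' hh'' => hcons h'' (Or.inr hh'')
  · rintro h (hh1 | hh2) hmax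
    · exfalso
      have := hmax (mid + 1) (Or.inr ha2)
      have := (hb1 h hh1).2
      omega
    · exact hd2 h hh2 fun h'' hh'' => hmax h'' (Or.inr hh'')

/-- Main lemma: the ceiling index set of the sub-bisection rooted at `(P[a,b], y_j)`
regularly partitions `[a,b]`. -/
lemma main_rp (Inter : ℕ → ℕ → Prop) (j : ℕ) :
    ∀ m a b, 1 ≤ a → b + 1 = a + 2 ^ m → Regular a b →
    RegularlyPartitions
      {i | ∃ c : ℕ × ℕ × ℕ × ℕ, PsiDesc Inter (a, b, j, j) c ∧
        IsLeafPair Inter c.1 c.2.1 c.2.2.1 c.2.2.2 ∧ c.1 = i} a b := by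
  intro m
  induction m with
  | zero =>
    intro a b ha hb hreg
    have h0 : (2 : ℕ) ^ 0 = 1 := pow_zero 2
    have hba : b = a := by omega
    subst hba
    exact rp_leaf_case Inter j b b le_rfl hreg (leaf_of_singleton Inter b j)
  | succ m' ih =>
    intro a b ha hb hreg
    by_cases hleaf : IsLeafPair Inter a b j j
    · have h2 : (2 : ℕ) ^ (m' + 1) = 2 * 2 ^ m' := by rw [pow_succ]; ring
      have h1 : 1 ≤ (2 : ℕ) ^ m' := Nat.one_le_pow _ _ (by norm_num)
      exact rp_leaf_case Inter j a b (by omega) hreg hleaf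
    · have h2 : (2 : ℕ) ^ (m' + 1) = 2 * 2 ^ m' := by rw [pow_succ]; ring
      have h1 : 1 ≤ (2 : ℕ) ^ m' := Nat.one_le_pow _ _ (by norm_num)
      set mid := a + 2 ^ m' - 1 with hmid_def
      have hu : upperHalfHi a b = mid := by unfold upperHalfHi; omega
      have hl : lowerHalfLo a b = mid + 1 := by unfold lowerHalfLo; omega
      have heven : Even (b - a + 1) := ⟨2 ^ m', by omega⟩
      have hru : Regular a mid := by
        have := Regular.upper hreg heven
        have he : (a + b - 1) / 2 = mid := by omega
        rwa [he] at this
      have hrl : Regular (mid + 1) b := by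
        have := Regular.lower hreg heven
        have he : (a + b + 1) / 2 = mid + 1 := by omega
        rwa [he] at this
      have hih1 := ih a mid ha (by omega) hru
      have hih2 := ih (mid + 1) b (by omega) (by omega) hrl
      have hchild1 : PsiChild Inter (a, mid, j, j) (a, b, j, j) :=
        ⟨hleaf, Or.inl ⟨rfl, Or.inl (by rw [show upperHalfHi (a, b, j, j).1 (a, b, j, j).2.1 = mid from hu])⟩⟩
      have hchild2 : PsiChild Inter (mid + 1, b, j, j) (a, b, j, j) :=
        ⟨hleaf, Or.inl ⟨rfl, Or.inr (by rw [show lowerHalfLo (a, b, j, j).1 (a, b, j, j).2.1 = mid + 1 from hl])⟩⟩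
      have hSeq : {i | ∃ c : ℕ × ℕ × ℕ × ℕ, PsiDesc Inter (a, b, j, j) c ∧
            IsLeafPair Inter c.1 c.2.1 c.2.2.1 c.2.2.2 ∧ c.1 = i} =
          {i | ∃ c : ℕ × ℕ × ℕ × ℕ, PsiDesc Inter (a, mid, j, j) c ∧
            IsLeafPair Inter c.1 c.2.1 c.2.2.1 c.2.2.2 ∧ c.1 = i} ∪
          {i | ∃ c : ℕ × ℕ × ℕ × ℕ, PsiDesc Inter (mid + 1, b, j, j) c ∧
            IsLeafPair Inter c.1 c.2.1 c.2.2.1 c.2.2.2 ∧ c.1 = i} := by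
        ext i
        constructor
        · rintro ⟨c, hdesc, hcleaf, hi⟩
          rcases Relation.ReflTransGen.cases_head hdesc with heq | ⟨d, hd, hrest⟩
          · exfalso; subst heq; exact hleaf hcleaf
          · rcases (psiChild_cases hd).2 with hde | hde
            · rw [hu] at hde; subst hde
              exact Or.inl ⟨c, hrest, hcleaf, hi⟩
            · rw [hl] at hde; subst hde
              exact Or.inr ⟨c, hrest, hcleaf, hi⟩
        · rintro (⟨c, hdesc, hcleaf, hi⟩ | ⟨c, hdesc, hcleaf, hi⟩)
          · exact ⟨c, Relation.ReflTransGen.head hchild1 hdesc, hcleaf, hi⟩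
          · exact ⟨c, Relation.ReflTransGen.head hchild2 hdesc, hcleaf, hi⟩
      rw [hSeq]
      exact rp_union (by omega) hih1 hih2

/-- Invariant maintained along the bisection tree Ψ. -/
lemma inv_lemma (Inter : ℕ → ℕ → Prop) (α β : ℕ) (hβα : β ≤ α) :
    ∀ {c : ℕ × ℕ × ℕ × ℕ}, PsiDesc Inter (1, 2 ^ α, 1, 2 ^ β) c →
      Regular c.1 c.2.1 ∧
      ∃ m n, n ≤ m ∧ c.2.1 + 1 = c.1 + 2 ^ m ∧ c.2.2.2 + 1 = c.2.2.1 + 2 ^ n := by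
  intro c h
  induction h with
  | refl =>
    exact ⟨Regular.base α, α, β, hβα,
      by show 2 ^ α + 1 = 1 + 2 ^ α; omega, by show 2 ^ β + 1 = 1 + 2 ^ β; omega⟩
  | @tail d c' hab hbc ih =>
    obtain ⟨hreg, m, n, hnm, hm, hn⟩ := ih
    obtain ⟨hd1, -⟩ := regular_facts hreg
    obtain ⟨hnl, hcase⟩ := hbc
    rcases hcase with ⟨hjj, hor⟩ | ⟨hjlt, hor⟩
    · -- equal Q-indices: n = 0
      have hn0 : n = 0 := by
        rcases n with _ | n
        · rfl
        · exfalso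
          have h1 : 1 ≤ (2 : ℕ) ^ n := Nat.one_le_pow _ _ (by norm_num)
          have h2 : (2 : ℕ) ^ (n + 1) = 2 * 2 ^ n := by rw [pow_succ]; ring
          omega
      subst hn0
      obtain ⟨m', rfl⟩ : ∃ m', m = m' + 1 := by
        rcases m with _ | m'
        · exfalso
          apply hnl
          have h0 : (2 : ℕ) ^ 0 = 1 := pow_zero 2
          have he1 : d.2.1 = d.1 := by omega
          have he2 : d.2.2.2 = d.2.2.1 := by omega
          rw [he1, he2, hjj]
          exact leaf_of_singleton Inter d.1 d.2.2.2
        · exact ⟨m', rfl⟩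
      have h2 : (2 : ℕ) ^ (m' + 1) = 2 * 2 ^ m' := by rw [pow_succ]; ring
      have h1 : 1 ≤ (2 : ℕ) ^ m' := Nat.one_le_pow _ _ (by norm_num)
      have heven : Even (d.2.1 - d.1 + 1) := ⟨2 ^ m', by omega⟩
      rcases hor with rfl | rfl
      · refine ⟨Regular.upper hreg heven, m', 0, by omega, ?_, ?_⟩ <;>
          simp only [upperHalfHi] <;> omega
      · refine ⟨Regular.lower hreg heven, m', 0, by omega, ?_, ?_⟩ <;>
          simp only [lowerHalfLo] <;> omega
    · -- strict Q-indices: n ≥ 1, hence m ≥ 1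
      obtain ⟨n', rfl⟩ : ∃ n', n = n' + 1 := by
        rcases n with _ | n'
        · exfalso
          have h0 : (2 : ℕ) ^ 0 = 1 := pow_zero 2
          omega
        · exact ⟨n', rfl⟩
      obtain ⟨m', rfl⟩ : ∃ m', m = m' + 1 := by
        rcases m with _ | m'
        · omega
        · exact ⟨m', rfl⟩
      have h2m : (2 : ℕ) ^ (m' + 1) = 2 * 2 ^ m' := by rw [pow_succ]; ring
      have h1m : 1 ≤ (2 : ℕ) ^ m' := Nat.one_le_pow _ _ (by norm_num)
      have h2n : (2 : ℕ) ^ (n' + 1) = 2 * 2 ^ n' := by rw [pow_succ]; ring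
      have h1n : 1 ≤ (2 : ℕ) ^ n' := Nat.one_le_pow _ _ (by norm_num)
      have heven : Even (d.2.1 - d.1 + 1) := ⟨2 ^ m', by omega⟩
      rcases hor with rfl | rfl | rfl | rfl
      · refine ⟨Regular.upper hreg heven, m', n', by omega, ?_, ?_⟩ <;>
          simp only [upperHalfHi] <;> omega
      · refine ⟨Regular.upper hreg heven, m', n', by omega, ?_, ?_⟩ <;>
          simp only [upperHalfHi, lowerHalfLo] <;> omega
      · refine ⟨Regular.lower hreg heven, m', n', by omega, ?_, ?_⟩ <;>
          simp only [upperHalfHi, lowerHalfLo] <;> omega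
      · refine ⟨Regular.lower hreg heven, m', n', by omega, ?_, ?_⟩ <;>
          simp only [lowerHalfLo] <;> omega

/-- In the bisection setting, for every pair `(P[i₁,i₂], y_j) ∈ Ψ`,
the set of indices `i` such that `(xᵢ, y_j)` is the ceiling of a leaf of Ψ that is
`(P[i₁,i₂],y_j)` itself or one of its descendants regularly partitions `[i₁,i₂]`, and
likewise the set of indices `i` such that `(xᵢ, y_{j+1})` is the Q-diagonal of such a
leaf regularly partitions `[i₁,i₂]`. -/
theorem ceiling_diagonal_regularly_partition {L : Type} [DecidableEq L]
    (P Q : RootPath L)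
    (hS₁ : ETree.IsEvolutionary P.tree) (hS₂ : ETree.IsEvolutionary Q.tree)
    (hlab : ETree.labelSet P.tree = ETree.labelSet Q.tree)
    (α β : ℕ) (hα : 1 ≤ α) (hβ : 1 ≤ β)
    (hp : P.len = 2 ^ α + 1) (hq : Q.len = 2 ^ β + 1) (hpq : Q.len ≤ P.len)
    (i₁ i₂ j : ℕ)
    (hmem : InPsi (Intersecting P Q) P.len Q.len (i₁, i₂, j, j)) :
    RegularlyPartitions
      {i : ℕ | ∃ c : ℕ × ℕ × ℕ × ℕ,
        PsiDesc (Intersecting P Q) (i₁, i₂, j, j) c ∧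
        IsLeafPair (Intersecting P Q) c.1 c.2.1 c.2.2.1 c.2.2.2 ∧
        (i, j) = (c.1, c.2.2.1)} i₁ i₂ ∧
    RegularlyPartitions
      {i : ℕ | ∃ c : ℕ × ℕ × ℕ × ℕ,
        PsiDesc (Intersecting P Q) (i₁, i₂, j, j) c ∧
        IsLeafPair (Intersecting P Q) c.1 c.2.1 c.2.2.1 c.2.2.2 ∧
        (i, j + 1) = (c.1, c.2.2.2 + 1)} i₁ i₂ := by
  set I := Intersecting P Q with hI
  have hβα : β ≤ α := by
    rw [hp, hq] at hpq
    have h2 : (2 : ℕ) ^ β ≤ 2 ^ α := by omega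
    exact (Nat.pow_le_pow_iff_right (by norm_num)).mp h2
  have hmem' : PsiDesc I (1, 2 ^ α, 1, 2 ^ β) (i₁, i₂, j, j) := by
    have h := hmem
    unfold InPsi at h
    rw [hp, hq] at h
    simpa using h
  obtain ⟨hreg, m, n, hnm, hm, hn⟩ := inv_lemma I α β hβα hmem'
  simp only at hreg hm hn
  obtain ⟨h1, -⟩ := regular_facts hreg
  have hrp := main_rp I j m i₁ i₂ h1 hm hreg
  have e1 : {i : ℕ | ∃ c : ℕ × ℕ × ℕ × ℕ,
        PsiDesc I (i₁, i₂, j, j) c ∧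
        IsLeafPair I c.1 c.2.1 c.2.2.1 c.2.2.2 ∧
        (i, j) = (c.1, c.2.2.1)} =
      {i | ∃ c : ℕ × ℕ × ℕ × ℕ, PsiDesc I (i₁, i₂, j, j) c ∧
        IsLeafPair I c.1 c.2.1 c.2.2.1 c.2.2.2 ∧ c.1 = i} := by
    ext i
    simp only [Set.mem_setOf_eq, Prod.mk.injEq]
    constructor
    · rintro ⟨c, hd, hl, hi, -⟩
      exact ⟨c, hd, hl, hi.symm⟩
    · rintro ⟨c, hd, hl, hi⟩
      exact ⟨c, hd, hl, hi.symm, (desc_shape hd).1.symm⟩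
  have e2 : {i : ℕ | ∃ c : ℕ × ℕ × ℕ × ℕ,
        PsiDesc I (i₁, i₂, j, j) c ∧
        IsLeafPair I c.1 c.2.1 c.2.2.1 c.2.2.2 ∧
        (i, j + 1) = (c.1, c.2.2.2 + 1)} =
      {i | ∃ c : ℕ × ℕ × ℕ × ℕ, PsiDesc I (i₁, i₂, j, j) c ∧
        IsLeafPair I c.1 c.2.1 c.2.2.1 c.2.2.2 ∧ c.1 = i} := by
    ext i
    simp only [Set.mem_setOf_eq, Prod.mk.injEq]
    constructor
    · rintro ⟨c, hd, hl, hi, -⟩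
      exact ⟨c, hd, hl, hi.symm⟩
    · rintro ⟨c, hd, hl, hi⟩
      exact ⟨c, hd, hl, hi.symm, by rw [(desc_shape hd).2]⟩
  rw [e1, e2]
  exact ⟨hrp, hrp⟩
end
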